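/- Let ω > 1 and set ρ₀ = arcsinh(1/√(ω² − 1)). Then ∫₀^{ρ₀} cosh²ρ · (1 − (ω² − 1) sinh²ρ)^{−1/2} dρ = (ω/(ω² − 1)) · E(1/ω²). (This evaluates the conserved energy of the folded closed GKP string/stringy membrane in terms of a complete elliptic integral.) -/

import Mathlib

/-!
Substitute `sinh ρ = cos θ / c` with `c = √(ω² - 1)`. Then `θ` runs over `(0, π/2)` as `ρ` runs
over `(0, ρ₀)`, the square root `√(1 - c² sinh² ρ)` becomes `sin θ`, and the integrand collapses to
`√(c² + cos² θ) / c² = (ω / c²) √(1 - sin² θ / ω²)`. The integrand is unbounded near `ρ₀`, so the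
substitution is made with the measure-theoretic change of variables on open intervals rather
than with the fundamental theorem of calculus.
-/

noncomputable section

open Real

/-- Complete elliptic integral of the first kind,
K(m) = ∫₀^{π/2} (1 − m sin²θ)^{−1/2} dθ. -/
def ellK (m : ℝ) : ℝ := ∫ θ in (0:ℝ)..(π / 2), (Real.sqrt (1 - m * Real.sin θ ^ 2))⁻¹

/-- Complete elliptic integral of the second kind,
E(m) = ∫₀^{π/2} (1 − m sin²θ)^{1/2} dθ. -/
def ellE (m : ℝ) : ℝ := ∫ θ in (0:ℝ)..(π / 2), Real.sqrt (1 - m * Real.sin θ ^ 2)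

open MeasureTheory Set

namespace Real

variable {c : ℝ}

lemma cos_mem_Ioo_zero_one {θ : ℝ} (hθ : θ ∈ Ioo 0 (π / 2)) : cos θ ∈ Ioo 0 1 := by
  refine ⟨cos_pos_of_mem_Ioo ⟨by linarith [hθ.1, pi_pos], hθ.2⟩, ?_⟩
  simpa using strictAntiOn_cos ⟨le_rfl, pi_pos.le⟩ ⟨hθ.1.le, by linarith [hθ.2, pi_pos]⟩ hθ.1

lemma antitoneOn_arsinh_cos_div (hc : 0 ≤ c) :
    AntitoneOn (fun θ ↦ arsinh (cos θ / c)) (Icc 0 π) := fun _ hx _ hy hxy ↦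
  arsinh_le_arsinh.mpr (div_le_div_of_nonneg_right (antitoneOn_cos hx hy hxy) hc)

lemma image_arsinh_cos_div_Ioo (hc : 0 < c) :
    (fun θ ↦ arsinh (cos θ / c)) '' Ioo 0 (π / 2) = Ioo 0 (arsinh c⁻¹) := by
  ext ρ
  constructor
  · rintro ⟨θ, hθ, rfl⟩
    obtain ⟨hcos₀, hcos₁⟩ := cos_mem_Ioo_zero_one hθ
    exact ⟨arsinh_pos_iff.mpr (by positivity),
      arsinh_lt_arsinh.mpr (by rw [div_lt_iff₀ hc, inv_mul_cancel₀ hc.ne']; exact hcos₁)⟩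
  · rintro ⟨hρ₀, hρ₁⟩
    have hs₀ : 0 < c * sinh ρ := mul_pos hc (sinh_pos_iff.mpr hρ₀)
    have hs₁ : c * sinh ρ < 1 := by
      have := sinh_lt_sinh.mpr hρ₁
      rw [sinh_arsinh] at this
      simpa [hc.ne'] using mul_lt_mul_of_pos_left this hc
    refine ⟨arccos (c * sinh ρ), ⟨arccos_pos.mpr hs₁, arccos_lt_pi_div_two.mpr hs₀⟩, ?_⟩
    dsimp only
    rw [cos_arccos (by linarith) hs₁.le, mul_div_cancel_left₀ _ hc.ne', arsinh_sinh]

lemma hasDerivAt_arsinh_cos_div (c θ : ℝ) :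
    HasDerivAt (fun θ ↦ arsinh (cos θ / c)) (-(sin θ / c / √(1 + (cos θ / c) ^ 2))) θ := by
  convert ((hasDerivAt_cos θ).div_const c).arsinh using 1
  rw [smul_eq_mul]
  ring

lemma setIntegral_Ioo_arsinh_inv_eq {E : Type*} [NormedAddCommGroup E] [NormedSpace ℝ E]
    (hc : 0 < c) (F : ℝ → E) :
    ∫ ρ in Ioo 0 (arsinh c⁻¹), F ρ =
      ∫ θ in Ioo 0 (π / 2), (sin θ / c / √(1 + (cos θ / c) ^ 2)) • F (arsinh (cos θ / c)) := by
  rw [← image_arsinh_cos_div_Ioo hc, integral_image_eq_integral_deriv_smul_of_antitoneOn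
    measurableSet_Ioo (fun θ _ ↦ (hasDerivAt_arsinh_cos_div c θ).hasDerivWithinAt)
    ((antitoneOn_arsinh_cos_div hc.le).mono
      (Ioo_subset_Icc_self.trans (Icc_subset_Icc_right (by linarith [pi_pos]))))]
  simp only [neg_neg]

lemma jacobian_mul_cosh_sq_div_sqrt_arsinh_cos_div (hc : 0 < c) {θ : ℝ} (hs : 0 < sin θ) :
    (sin θ / c / √(1 + (cos θ / c) ^ 2)) *
        (cosh (arsinh (cos θ / c)) ^ 2 * (√(1 - c ^ 2 * sinh (arsinh (cos θ / c)) ^ 2))⁻¹) =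
      √(1 + c ^ 2) / c ^ 2 * √(1 - 1 / (1 + c ^ 2) * sin θ ^ 2) := by
  have hsc := sin_sq_add_cos_sq θ
  have hD : √(1 + (cos θ / c) ^ 2) = √(c ^ 2 + cos θ ^ 2) / c := by
    rw [show 1 + (cos θ / c) ^ 2 = (c ^ 2 + cos θ ^ 2) / c ^ 2 by field_simp,
      sqrt_div' _ (sq_nonneg c), sqrt_sq hc.le]
  have hS : √(1 - c ^ 2 * (cos θ / c) ^ 2) = sin θ := by
    rw [show 1 - c ^ 2 * (cos θ / c) ^ 2 = sin θ ^ 2 by field_simp; linarith, sqrt_sq hs.le]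
  have hE : √(1 - 1 / (1 + c ^ 2) * sin θ ^ 2) = √(c ^ 2 + cos θ ^ 2) / √(1 + c ^ 2) := by
    rw [show 1 - 1 / (1 + c ^ 2) * sin θ ^ 2 = (c ^ 2 + cos θ ^ 2) / (1 + c ^ 2) by
      field_simp; linarith, sqrt_div' _ (by positivity)]
  rw [cosh_arsinh, sinh_arsinh, sq_sqrt (by positivity), hS, hE, hD]
  field_simp
  exact (sq_sqrt (by positivity)).symm

theorem integral_cosh_sq_div_sqrt_eq_ellE (hc : 0 < c) :
    ∫ ρ in (0:ℝ)..arsinh c⁻¹, cosh ρ ^ 2 * (√(1 - c ^ 2 * sinh ρ ^ 2))⁻¹ =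
      √(1 + c ^ 2) / c ^ 2 * ellE (1 / (1 + c ^ 2)) := by
  rw [intervalIntegral.integral_of_le (arsinh_nonneg_iff.mpr (by positivity)),
    integral_Ioc_eq_integral_Ioo, setIntegral_Ioo_arsinh_inv_eq hc, ellE,
    intervalIntegral.integral_of_le (by positivity), integral_Ioc_eq_integral_Ioo,
    ← integral_const_mul]
  refine setIntegral_congr_fun measurableSet_Ioo fun θ hθ ↦ ?_
  exact jacobian_mul_cosh_sq_div_sqrt_arsinh_cos_div hc
    (sin_pos_of_pos_of_lt_pi hθ.1 (by linarith [hθ.2, pi_pos]))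

end Real

/-- The conserved energy integral of the folded closed GKP string/stringy
membrane evaluates to a complete elliptic integral of the second kind. -/
theorem gkp_energy_integral (ω : ℝ) (hω : 1 < ω) (ρ₀ : ℝ)
    (hρ₀ : ρ₀ = Real.arsinh (1 / Real.sqrt (ω ^ 2 - 1))) :
    ∫ ρ in (0:ℝ)..ρ₀,
        Real.cosh ρ ^ 2 * (Real.sqrt (1 - (ω ^ 2 - 1) * Real.sinh ρ ^ 2))⁻¹
      = (ω / (ω ^ 2 - 1)) * ellE (1 / ω ^ 2) := by
  have hω₀ : 0 < ω := by linarith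
  have hω₁ : 0 < ω ^ 2 - 1 := by nlinarith
  have h := integral_cosh_sq_div_sqrt_eq_ellE (sqrt_pos.mpr hω₁)
  rwa [sq_sqrt hω₁.le, add_sub_cancel, sqrt_sq hω₀.le, ← one_div, ← hρ₀] at h
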